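/- Let d ≥ 2, let {e_n}_{n=1}^{N} be a family of N mutually unbiased orthonormal bases of ℂ^d with projections Π_{nk}, and let ρ be a density matrix on ℂ^d (positive semidefinite with trace 1). Setting p_{nk} = tr(Π_{nk} ρ), the probabilities satisfy Σ_{n=1}^{N} Σ_{k=1}^{d} p_{nk}² ≤ tr(ρ²) + 1. -/

import Mathlib

open scoped BigOperators ComplexOrder

/-- Rank-one orthogonal projection `|v⟩⟨v|` onto a vector `v ∈ ℂ^d`, as a matrix. -/
noncomputable def proj {d : ℕ} (v : EuclideanSpace ℂ (Fin d)) : Matrix (Fin d) (Fin d) ℂ :=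
  Matrix.of fun i j => v i * star (v j)

/-- A family of orthonormal bases of `ℂ^d` is mutually unbiased if
`|⟨e n k, e m l⟩|² = 1/d` for all `n ≠ m` and all `k, l`. -/
def MutuallyUnbiased {d N : ℕ} (e : Fin N → Fin d → EuclideanSpace ℂ (Fin d)) : Prop :=
  ∀ n m : Fin N, n ≠ m → ∀ k l : Fin d,
    ‖(inner ℂ (e n k) (e m l) : ℂ)‖ ^ 2 = 1 / d

/-!
In the Hilbert–Schmidt space of `d × d` matrices the projections `Π_{nk}` of one basis are
orthonormal, projections from two different bases have inner product `1/d`, and every `Π_{nk}`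
has inner product `1` with the identity `𝟙`, of squared norm `d`. For such a family, put
`t = ⟨𝟙, ρ⟩` and `σ = ρ - (t/d) 𝟙`; then `Σ_k Π_{nk} = 𝟙` forces `Σ_k ⟨Π_{nk}, σ⟩ = 0`, which makes
the vectors `X_n = Σ_k ⟨Π_{nk}, σ⟩ Π_{nk}` pairwise orthogonal with `⟨X_n, σ⟩ = ‖X_n‖²`. Hence
`Σ_{n,k} |⟨Π_{nk}, σ⟩|² = ‖Σ_n X_n‖² ≤ ‖σ‖²`, i.e.
`Σ_{n,k} |⟨Π_{nk}, ρ⟩|² ≤ ‖ρ‖² + (N - 1) |t|² / d`.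
Summing this inequality over an orthonormal basis of the `d²`-dimensional space gives
`N d ≤ d² + N - 1`, i.e. `N ≤ d + 1`, so the last term is at most `1` when `tr ρ = 1`.
-/

open scoped InnerProductSpace

section Frame

variable {𝕜 E ι κ : Type*} [RCLike 𝕜] [NormedAddCommGroup E] [InnerProductSpace 𝕜 E]
  [Fintype ι]

open RCLike

lemma norm_sq_le_of_inner_self_eq_inner {x y : E} (h : ⟪x, x⟫_𝕜 = ⟪x, y⟫_𝕜) :
    ‖x‖ ^ 2 ≤ ‖y‖ ^ 2 := by
  have hxy : ‖x‖ ^ 2 ≤ ‖x‖ * ‖y‖ := by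
    rw [← inner_self_eq_norm_sq (𝕜 := 𝕜), h]
    exact re_inner_le_norm x y
  have : ‖x‖ ≤ ‖y‖ := by nlinarith [norm_nonneg x, norm_nonneg y]
  gcongr

lemma sum_norm_add_sq_of_sum_eq_zero (b : ι → 𝕜) (hb : ∑ i, b i = 0) (c : 𝕜) :
    ∑ i, ‖b i + c‖ ^ 2 = ∑ i, ‖b i‖ ^ 2 + Fintype.card ι * ‖c‖ ^ 2 := by
  have hcross : ∑ i, 2 * re ⟪b i, c⟫_𝕜 = 0 := by
    rw [← Finset.mul_sum, ← map_sum, ← sum_inner, hb, inner_zero_left, map_zero, mul_zero]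
  simp only [@norm_add_sq 𝕜, Finset.sum_add_distrib, hcross, add_zero, Finset.sum_const,
    Finset.card_univ, nsmul_eq_mul]

lemma sum_eq_of_orthonormal_of_inner_eq_one {v : ι → E} (hv : Orthonormal 𝕜 v) {I : E}
    (hvI : ∀ k, ⟪v k, I⟫_𝕜 = 1) (hII : ⟪I, I⟫_𝕜 = Fintype.card ι) : ∑ k, v k = I := by
  have hvv : ⟪∑ k, v k, ∑ k, v k⟫_𝕜 = Fintype.card ι := by
    simpa using hv.inner_sum (fun _ => 1) (fun _ => 1) Finset.univ
  have hvI' : ⟪∑ k, v k, I⟫_𝕜 = Fintype.card ι := by simp [sum_inner, hvI]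
  have hIv : ⟪I, ∑ k, v k⟫_𝕜 = Fintype.card ι := by
    rw [← inner_conj_symm, hvI', map_natCast]
  rw [← sub_eq_zero, ← inner_self_eq_zero (𝕜 := 𝕜)]
  simp only [inner_sub_left, inner_sub_right, hvv, hvI', hIv, hII, sub_self]

lemma sum_sum_norm_inner_sq_le_of_sum_inner_eq_zero [Fintype κ] {T : κ → ι → E}
    (hT : ∀ n, Orthonormal 𝕜 (T n))
    (hTT : ∀ n m, n ≠ m → ∀ k l, ⟪T n k, T m l⟫_𝕜 = (Fintype.card ι : 𝕜)⁻¹)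
    {y : E} (hy : ∀ n, ∑ k, ⟪T n k, y⟫_𝕜 = 0) :
    ∑ n, ∑ k, ‖⟪T n k, y⟫_𝕜‖ ^ 2 ≤ ‖y‖ ^ 2 := by
  classical
  set S : κ → ℝ := fun n => ∑ k, ‖⟪T n k, y⟫_𝕜‖ ^ 2
  set X : κ → E := fun n => ∑ k, ⟪T n k, y⟫_𝕜 • T n k
  have hXX : ∀ n m, ⟪X n, X m⟫_𝕜 = if n = m then (S n : 𝕜) else 0 := by
    intro n m
    split_ifs with hnm
    · subst hnm
      simp only [X, S, (hT n).inner_sum, RCLike.conj_mul, ofReal_sum, ofReal_pow]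
    · simp only [X, sum_inner, inner_sum, inner_smul_left, inner_smul_right, hTT n m hnm]
      simp [← Finset.sum_mul, hy]
  have hXy : ∀ n, ⟪X n, y⟫_𝕜 = S n := by
    intro n
    simp only [X, S, sum_inner, inner_smul_left, RCLike.conj_mul, ofReal_sum, ofReal_pow]
  have hsum : ⟪∑ n, X n, ∑ n, X n⟫_𝕜 = ⟪∑ n, X n, y⟫_𝕜 := by
    simp only [sum_inner, inner_sum, hXX, hXy, Finset.sum_ite_eq', Finset.mem_univ, if_true]
  calc ∑ n, S n = ‖∑ n, X n‖ ^ 2 := by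
        rw [← inner_self_eq_norm_sq (𝕜 := 𝕜), hsum]
        simp only [sum_inner, hXy, ← ofReal_sum, ofReal_re]
    _ ≤ ‖y‖ ^ 2 := norm_sq_le_of_inner_self_eq_inner hsum

variable (𝕜) in
structure IsUnbiasedFrame (T : κ → ι → E) (I : E) : Prop where
  orthonormal : ∀ n, Orthonormal 𝕜 (T n)
  inner_of_ne : ∀ n m, n ≠ m → ∀ k l, ⟪T n k, T m l⟫_𝕜 = (Fintype.card ι : 𝕜)⁻¹
  inner_unit : ∀ n k, ⟪T n k, I⟫_𝕜 = 1
  inner_unit_self : ⟪I, I⟫_𝕜 = Fintype.card ι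

namespace IsUnbiasedFrame

variable {T : κ → ι → E} {I : E}

lemma norm_unit_sq (hF : IsUnbiasedFrame 𝕜 T I) : ‖I‖ ^ 2 = Fintype.card ι := by
  rw [← inner_self_eq_norm_sq (𝕜 := 𝕜), hF.inner_unit_self, RCLike.natCast_re]

variable [Fintype κ]

theorem sum_sum_norm_inner_sq_le [Nonempty ι] (hF : IsUnbiasedFrame 𝕜 T I) (x : E) :
    ∑ n, ∑ k, ‖⟪T n k, x⟫_𝕜‖ ^ 2
      ≤ ‖x‖ ^ 2 + (Fintype.card κ - 1) * ‖⟪I, x⟫_𝕜‖ ^ 2 / Fintype.card ι := by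
  set d := Fintype.card ι
  have hd : (d : ℝ) ≠ 0 := Nat.cast_ne_zero.mpr Fintype.card_ne_zero
  have hd' : (d : 𝕜) ≠ 0 := Nat.cast_ne_zero.mpr Fintype.card_ne_zero
  set t := ⟪I, x⟫_𝕜
  set y := x - (t / d) • I
  have hTx : ∀ n k, ⟪T n k, x⟫_𝕜 = ⟪T n k, y⟫_𝕜 + t / d := by
    intro n k
    simp [y, inner_sub_right, inner_smul_right, hF.inner_unit]
  have hIy : ⟪I, y⟫_𝕜 = 0 := by
    rw [inner_sub_right, inner_smul_right, hF.inner_unit_self, div_mul_cancel₀ _ hd', sub_self]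
  have hTy : ∀ n, ∑ k, ⟪T n k, y⟫_𝕜 = 0 := fun n => by
    rw [← sum_inner, sum_eq_of_orthonormal_of_inner_eq_one (hF.orthonormal n) (hF.inner_unit n)
      hF.inner_unit_self, hIy]
  have hy : ‖y‖ ^ 2 = ‖x‖ ^ 2 - ‖t‖ ^ 2 / d := by
    have hx : x = y + (t / d) • I := by simp [y]
    have hyI : ⟪y, (t / d) • I⟫_𝕜 = 0 := by
      rw [inner_smul_right, inner_eq_zero_symm.mp hIy, mul_zero]
    rw [hx, @norm_add_sq 𝕜, hyI, map_zero, mul_zero, add_zero, norm_smul, mul_pow, hF.norm_unit_sq,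
      norm_div, RCLike.norm_natCast]
    field_simp
    ring
  calc ∑ n, ∑ k, ‖⟪T n k, x⟫_𝕜‖ ^ 2
      = ∑ n, (∑ k, ‖⟪T n k, y⟫_𝕜‖ ^ 2 + ‖t‖ ^ 2 / d) := by
        refine Finset.sum_congr rfl fun n _ => ?_
        simp only [hTx, sum_norm_add_sq_of_sum_eq_zero _ (hTy n), norm_div, RCLike.norm_natCast]
        field_simp
        ring
    _ = ∑ n, ∑ k, ‖⟪T n k, y⟫_𝕜‖ ^ 2 + Fintype.card κ * (‖t‖ ^ 2 / d) := by
        rw [Finset.sum_add_distrib, Finset.sum_const, Finset.card_univ, nsmul_eq_mul]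
    _ ≤ ‖y‖ ^ 2 + Fintype.card κ * (‖t‖ ^ 2 / d) := by
        gcongr
        exact sum_sum_norm_inner_sq_le_of_sum_inner_eq_zero hF.orthonormal hF.inner_of_ne hTy
    _ = ‖x‖ ^ 2 + (Fintype.card κ - 1) * ‖t‖ ^ 2 / d := by
        rw [hy]
        ring

theorem card_mul_card_le_finrank_add [Nonempty ι] [FiniteDimensional 𝕜 E]
    (hF : IsUnbiasedFrame 𝕜 T I) :
    (Fintype.card κ * Fintype.card ι : ℝ) ≤ Module.finrank 𝕜 E + Fintype.card κ - 1 := by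
  set b := stdOrthonormalBasis 𝕜 E
  have htrace := Finset.sum_le_sum fun i (_ : i ∈ Finset.univ) =>
    hF.sum_sum_norm_inner_sq_le (b i)
  have hlhs : ∑ i, ∑ n, ∑ k, ‖⟪T n k, b i⟫_𝕜‖ ^ 2 = Fintype.card κ * Fintype.card ι := by
    rw [Finset.sum_comm, Finset.sum_congr rfl fun n _ => Finset.sum_comm]
    simp [b.sum_sq_norm_inner_left, fun n k => (hF.orthonormal n).1 k]
  have hrhs : ∑ i, (‖b i‖ ^ 2 + (Fintype.card κ - 1) * ‖⟪I, b i⟫_𝕜‖ ^ 2 / Fintype.card ι)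
      = (Module.finrank 𝕜 E + Fintype.card κ - 1 : ℝ) := by
    simp only [Finset.sum_add_distrib, b.orthonormal.1, ← Finset.sum_div, ← Finset.mul_sum,
      b.sum_sq_norm_inner_left, hF.norm_unit_sq]
    field_simp
    simp only [Finset.sum_const, Finset.card_univ, Fintype.card_fin, nsmul_eq_mul, mul_one]
    ring
  rwa [hlhs, hrhs] at htrace

end IsUnbiasedFrame

end Frame

namespace Matrix

variable {𝕜 m n : Type*} [RCLike 𝕜] [Fintype m] [Fintype n]

noncomputable def toEuclideanVec (A : Matrix m n 𝕜) : EuclideanSpace 𝕜 (n × m) :=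
  WithLp.toLp 2 A.vec

lemma inner_toEuclideanVec (A B : Matrix m n 𝕜) :
    ⟪A.toEuclideanVec, B.toEuclideanVec⟫_𝕜 = (Aᴴ * B).trace := by
  rw [toEuclideanVec, toEuclideanVec, EuclideanSpace.inner_toLp_toLp, dotProduct_comm,
    star_vec_dotProduct_vec]

lemma norm_toEuclideanVec_sq (A : Matrix m n 𝕜) :
    ‖A.toEuclideanVec‖ ^ 2 = RCLike.re (Aᴴ * A).trace := by
  rw [← inner_self_eq_norm_sq (𝕜 := 𝕜), inner_toEuclideanVec]

end Matrix

section Proj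

variable {d : ℕ}

open Matrix

lemma proj_eq_vecMulVec (v : EuclideanSpace ℂ (Fin d)) : proj v = vecMulVec v (star v) := rfl

lemma conjTranspose_proj (v : EuclideanSpace ℂ (Fin d)) : (proj v)ᴴ = proj v := by
  simp [proj_eq_vecMulVec]

lemma trace_proj (v : EuclideanSpace ℂ (Fin d)) : (proj v).trace = ⟪v, v⟫_ℂ := by
  rw [proj_eq_vecMulVec, trace_vecMulVec, EuclideanSpace.inner_eq_star_dotProduct]

lemma trace_proj_mul_proj (v u : EuclideanSpace ℂ (Fin d)) :
    (proj v * proj u).trace = (‖⟪v, u⟫_ℂ‖ ^ 2 : ℝ) := by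
  rw [proj_eq_vecMulVec, proj_eq_vecMulVec, vecMulVec_mul_vecMulVec, trace_vecMulVec,
    dotProduct_smul, smul_eq_mul, dotProduct_comm, ← EuclideanSpace.inner_eq_star_dotProduct,
    show v.ofLp ⬝ᵥ star u.ofLp = ⟪u, v⟫_ℂ from rfl, ← inner_conj_symm u v, Complex.mul_conj, Complex.normSq_eq_norm_sq]

end Proj

section MutuallyUnbiased

variable {d N : ℕ}

open Matrix

lemma inner_toEuclideanVec_proj (v u : EuclideanSpace ℂ (Fin d)) :
    ⟪(proj v).toEuclideanVec, (proj u).toEuclideanVec⟫_ℂ = (‖⟪v, u⟫_ℂ‖ ^ 2 : ℝ) := by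
  rw [inner_toEuclideanVec, conjTranspose_proj, trace_proj_mul_proj]

lemma orthonormal_toEuclideanVec_proj {v : Fin d → EuclideanSpace ℂ (Fin d)}
    (hv : Orthonormal ℂ v) : Orthonormal ℂ fun k => (proj (v k)).toEuclideanVec := by
  rw [orthonormal_iff_ite] at hv ⊢
  intro k l
  rw [inner_toEuclideanVec_proj, hv]
  split_ifs <;> simp

lemma inner_toEuclideanVec_proj_one {v : EuclideanSpace ℂ (Fin d)} (hv : ‖v‖ = 1) :
    ⟪(proj v).toEuclideanVec, (1 : Matrix (Fin d) (Fin d) ℂ).toEuclideanVec⟫_ℂ = 1 := by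
  rw [inner_toEuclideanVec, conjTranspose_proj, mul_one, trace_proj, inner_self_eq_norm_sq_to_K,
    hv]
  simp

lemma inner_toEuclideanVec_one_one :
    ⟪(1 : Matrix (Fin d) (Fin d) ℂ).toEuclideanVec,
      (1 : Matrix (Fin d) (Fin d) ℂ).toEuclideanVec⟫_ℂ = Fintype.card (Fin d) := by
  rw [inner_toEuclideanVec, conjTranspose_one, mul_one, trace_one]

lemma inner_toEuclideanVec_proj_of_mutuallyUnbiased
    {e : Fin N → Fin d → EuclideanSpace ℂ (Fin d)} (hmub : MutuallyUnbiased e) {n m : Fin N}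
    (hnm : n ≠ m) (k l : Fin d) :
    ⟪(proj (e n k)).toEuclideanVec, (proj (e m l)).toEuclideanVec⟫_ℂ
      = (Fintype.card (Fin d) : ℂ)⁻¹ := by
  rw [inner_toEuclideanVec_proj, hmub n m hnm k l]
  simp

lemma isUnbiasedFrame_toEuclideanVec_proj [NeZero d]
    {e : Fin N → Fin d → EuclideanSpace ℂ (Fin d)} (horth : ∀ n, Orthonormal ℂ (e n))
    (hmub : MutuallyUnbiased e) :
    IsUnbiasedFrame ℂ (fun n k => (proj (e n k)).toEuclideanVec)
      (1 : Matrix (Fin d) (Fin d) ℂ).toEuclideanVec where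
  orthonormal n := orthonormal_toEuclideanVec_proj (horth n)
  inner_of_ne _ _ hnm := inner_toEuclideanVec_proj_of_mutuallyUnbiased hmub hnm
  inner_unit n k := inner_toEuclideanVec_proj_one ((horth n).1 k)
  inner_unit_self := inner_toEuclideanVec_one_one

theorem card_le_of_mutuallyUnbiased (hd : 2 ≤ d) {e : Fin N → Fin d → EuclideanSpace ℂ (Fin d)}
    (horth : ∀ n, Orthonormal ℂ (e n)) (hmub : MutuallyUnbiased e) : N ≤ d + 1 := by
  have : NeZero d := ⟨by omega⟩
  have h := (isUnbiasedFrame_toEuclideanVec_proj horth hmub).card_mul_card_le_finrank_add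
  simp only [Fintype.card_fin, finrank_euclideanSpace, Fintype.card_prod] at h
  have hd' : (2 : ℝ) ≤ d := by exact_mod_cast hd
  by_contra! hN
  have hN' : (d + 2 : ℝ) ≤ N := by exact_mod_cast hN
  push_cast at h
  nlinarith

theorem sum_sum_norm_trace_proj_mul_sq_le [NeZero d]
    {e : Fin N → Fin d → EuclideanSpace ℂ (Fin d)} (horth : ∀ n, Orthonormal ℂ (e n))
    (hmub : MutuallyUnbiased e) (A : Matrix (Fin d) (Fin d) ℂ) :
    ∑ n, ∑ k, ‖(proj (e n k) * A).trace‖ ^ 2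
      ≤ RCLike.re (Aᴴ * A).trace + (N - 1) * ‖A.trace‖ ^ 2 / d := by
  have h := (isUnbiasedFrame_toEuclideanVec_proj horth hmub).sum_sum_norm_inner_sq_le
    A.toEuclideanVec
  simpa [inner_toEuclideanVec, conjTranspose_proj, norm_toEuclideanVec_sq] using h

end MutuallyUnbiased

theorem stmt_3 (d N : ℕ) (hd : 2 ≤ d)
    (e : Fin N → Fin d → EuclideanSpace ℂ (Fin d))
    (horth : ∀ n, Orthonormal ℂ (e n))
    (hmub : MutuallyUnbiased e)
    (ρ : Matrix (Fin d) (Fin d) ℂ) (hpsd : ρ.PosSemidef) (htr : ρ.trace = 1)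
    (p : Fin N → Fin d → ℝ)
    (hp : ∀ n k, p n k = ((proj (e n k) * ρ).trace).re) :
    ∑ n : Fin N, ∑ k : Fin d, (p n k) ^ 2 ≤ ((ρ * ρ).trace).re + 1 := by
  have : NeZero d := ⟨by omega⟩
  have hN : (N : ℝ) ≤ d + 1 := by exact_mod_cast card_le_of_mutuallyUnbiased hd horth hmub
  have hd' : (0 : ℝ) < d := by positivity
  have hframe := sum_sum_norm_trace_proj_mul_sq_le horth hmub ρ
  rw [hpsd.1.eq, htr] at hframe
  calc ∑ n, ∑ k, p n k ^ 2 ≤ ∑ n, ∑ k, ‖(proj (e n k) * ρ).trace‖ ^ 2 := by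
        refine Finset.sum_le_sum fun n _ => Finset.sum_le_sum fun k _ => ?_
        rw [hp, ← sq_abs]
        exact pow_le_pow_left₀ (abs_nonneg _) (Complex.abs_re_le_norm _) 2
    _ ≤ ((ρ * ρ).trace).re + (N - 1) / d := by simpa using hframe
    _ ≤ ((ρ * ρ).trace).re + 1 := by
        gcongr
        rw [div_le_one hd']
        linarith
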